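/- arXiv:1711.08854 — 3 statements merged into one kernel-verified Lean document; each statement's English description precedes it below -/
import Mathlib

section
/- Let a ∈ ℚ with 0 < a < 1. Let F_a ∈ ℚ[[X]] denote the hypergeometric series ₂F₁(a, 1−a; 1; λ), i.e. F_a = Σ_{i≥0} ((a)_i (1−a)_i / (i!)²) X^i. For i ≥ 1 set K_{a,i} = Σ_{k=1}^{i} ( 2/k − 1/(k−a) − 1/(k−1+a) ), and let G_a = Σ_{i≥1} K_{a,i} ((a)_i (1−a)_i / (i!)²) X^i ∈ ℚ[[X]]. Then, in ℚ[[X]], writing ' for the formal derivative: X(1−X)·(G_a′·F_a − G_a·F_a′) = (1−X)·F_a² − 1. (This is the formal content of the paper's Lemma stating that τ_n(λ) = −log λ + κ_n + G_a/F_a with a = n/N satisfies λ·dτ_n/dλ = −(1−λ)^{−1} F_a(λ)^{−2}.) -/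
open PowerSeries

/-- The hypergeometric series `₂F₁(a, 1-a; 1; X) ∈ ℚ[[X]]`. -/
noncomputable def hypF (a : ℚ) : PowerSeries ℚ :=
  PowerSeries.mk fun i =>
    (ascPochhammer ℚ i).eval a * (ascPochhammer ℚ i).eval (1 - a) / ((i.factorial : ℚ)) ^ 2

/-- `K_{a,i} = Σ_{k=1}^{i} (2/k - 1/(k-a) - 1/(k-1+a))`. -/
noncomputable def Kcoef (a : ℚ) (i : ℕ) : ℚ :=
  ∑ k ∈ Finset.Icc 1 i, (2 / (k : ℚ) - 1 / ((k : ℚ) - a) - 1 / ((k : ℚ) - 1 + a))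

/-- `G_a = Σ_{i ≥ 1} K_{a,i}·((a)_i (1-a)_i / (i!)²)·X^i ∈ ℚ[[X]]`. -/
noncomputable def hypG (a : ℚ) : PowerSeries ℚ :=
  PowerSeries.mk fun i =>
    Kcoef a i * ((ascPochhammer ℚ i).eval a * (ascPochhammer ℚ i).eval (1 - a)
      / ((i.factorial : ℚ)) ^ 2)

/-! With `p = X(1-X)` the hypergeometric equation of `F = F_a` reads `(p F')' = a(1-a) F`.
Its coefficient recurrence, together with
`K_{a,i+1} - K_{a,i} = 2/(i+1) - 1/(i+1-a) - 1/(i+a)`, shows that `G = G_a` solves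
`(p G')' = a(1-a) G + 2(1-X) F' - F`. By Lagrange's identity
`(p (G' F - G F'))' = F (p G')' - G (p F')' = 2(1-X) F F' - F² = ((1-X) F²)'`,
and both sides of the claim vanish at `X = 0`. -/

theorem Derivation.map_mul_wronskian {R A : Type*} [CommSemiring R] [CommRing A] [Algebra R A]
    (D : Derivation R A A) (p f g : A) :
    D (p * (D g * f - g * D f)) = f * D (p * D g) - g * D (p * D f) := by
  simp only [Derivation.leibniz, map_sub, smul_eq_mul]
  ring

section Coefficients

variable {R : Type*} [CommRing R]

theorem PowerSeries.coeff_X_mul_derivative (f : R⟦X⟧) (n : ℕ) :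
    coeff n (X * d⁄dX R f) = n * coeff n f := by
  rcases n with _ | n
  · simp
  · rw [coeff_succ_X_mul, coeff_derivative, mul_comm]
    push_cast
    rfl

theorem PowerSeries.coeff_derivative_X_mul_one_sub_X_mul_derivative (f : R⟦X⟧) (n : ℕ) :
    coeff n (d⁄dX R (X * (1 - X) * d⁄dX R f))
      = (n + 1) * ((n + 1) * coeff (n + 1) f - n * coeff n f) := by
  rw [coeff_derivative, mul_assoc, coeff_succ_X_mul, sub_mul, one_mul, map_sub,
    coeff_X_mul_derivative, coeff_derivative]
  ring

end Coefficients

noncomputable def hypCoeff (a : ℚ) (i : ℕ) : ℚ :=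
  (ascPochhammer ℚ i).eval a * (ascPochhammer ℚ i).eval (1 - a) / ((i.factorial : ℚ)) ^ 2

theorem hypF_eq_mk (a : ℚ) : hypF a = PowerSeries.mk (hypCoeff a) := rfl

theorem hypG_eq_mk (a : ℚ) : hypG a = PowerSeries.mk fun i => Kcoef a i * hypCoeff a i := rfl

theorem hypCoeff_succ (a : ℚ) (i : ℕ) :
    ((i : ℚ) + 1) ^ 2 * hypCoeff a (i + 1) = (i + a) * (i + 1 - a) * hypCoeff a i := by
  have hfac : (i.factorial : ℚ) ≠ 0 := by positivity
  simp only [hypCoeff, ascPochhammer_succ_right, Nat.factorial_succ, Polynomial.eval_mul,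
    Polynomial.eval_add, Polynomial.eval_X, Polynomial.eval_natCast, Nat.cast_mul]
  field_simp
  push_cast
  ring

theorem Kcoef_succ (a : ℚ) (i : ℕ) :
    Kcoef a (i + 1)
      = Kcoef a i + (2 / ((i : ℚ) + 1) - 1 / ((i : ℚ) + 1 - a) - 1 / ((i : ℚ) + a)) := by
  rw [Kcoef, ← Finset.insert_Icc_right_eq_Icc_add_one (by omega), Finset.sum_insert (by simp),
    add_comm, ← Kcoef]
  push_cast
  ring

theorem Kcoef_mul_hypCoeff_succ (a : ℚ) (i : ℕ) (h₁ : (i : ℚ) + a ≠ 0)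
    (h₂ : (i : ℚ) + 1 - a ≠ 0) :
    ((i : ℚ) + 1) ^ 2 * (Kcoef a (i + 1) * hypCoeff a (i + 1))
        - (i + a) * (i + 1 - a) * (Kcoef a i * hypCoeff a i)
      = 2 * (i + 1) * hypCoeff a (i + 1) - (2 * i + 1) * hypCoeff a i := by
  have h₀ : (i : ℚ) + 1 ≠ 0 := by positivity
  have hc : hypCoeff a (i + 1) = (i + a) * (i + 1 - a) * hypCoeff a i / ((i : ℚ) + 1) ^ 2 := by
    rw [← hypCoeff_succ]
    field_simp
  rw [Kcoef_succ, hc]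
  field_simp
  ring

theorem hypF_ode (a : ℚ) :
    d⁄dX ℚ (X * (1 - X) * d⁄dX ℚ (hypF a)) = C (a * (1 - a)) * hypF a := by
  ext n
  rw [coeff_derivative_X_mul_one_sub_X_mul_derivative, coeff_C_mul, hypF_eq_mk, coeff_mk,
    coeff_mk]
  linear_combination hypCoeff_succ a n

theorem hypG_ode (a : ℚ) (ha : ∀ n : ℤ, (n : ℚ) ≠ a) :
    d⁄dX ℚ (X * (1 - X) * d⁄dX ℚ (hypG a))
      = C (a * (1 - a)) * hypG a + 2 * ((1 - X) * d⁄dX ℚ (hypF a)) - hypF a := by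
  ext n
  have h₁ : (n : ℚ) + a ≠ 0 := fun h => ha (-n) (by push_cast; linarith)
  have h₂ : (n : ℚ) + 1 - a ≠ 0 := fun h => ha (n + 1) (by push_cast; linarith)
  rw [coeff_derivative_X_mul_one_sub_X_mul_derivative, map_sub, map_add, coeff_C_mul,
    ← map_ofNat C 2, coeff_C_mul, sub_mul, one_mul, map_sub, coeff_X_mul_derivative,
    coeff_derivative, hypG_eq_mk, hypF_eq_mk, coeff_mk, coeff_mk, coeff_mk, coeff_mk]
  linear_combination Kcoef_mul_hypCoeff_succ a n h₁ h₂

/-- `X(1-X)(G_a′ F_a - G_a F_a′) = (1-X) F_a² - 1` in `ℚ[[X]]`. -/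
theorem hypG_wronskian (a : ℚ) (ha0 : 0 < a) (ha1 : a < 1) :
    PowerSeries.X * (1 - PowerSeries.X) *
        ((d⁄dX ℚ (hypG a)) * hypF a - hypG a * (d⁄dX ℚ (hypF a)))
      = (1 - PowerSeries.X) * (hypF a) ^ 2 - 1 := by
  have ha : ∀ n : ℤ, (n : ℚ) ≠ a := by
    rintro n rfl
    have : (0 : ℤ) < n ∧ n < 1 := ⟨by exact_mod_cast ha0, by exact_mod_cast ha1⟩
    omega
  apply derivative.ext
  · rw [Derivation.map_mul_wronskian, hypF_ode, hypG_ode a ha]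
    simp only [Derivation.leibniz, Derivation.leibniz_pow, map_sub, derivative_X,
      Derivation.map_one_eq_zero, smul_eq_mul]
    ring
  · simp [hypF_eq_mk, hypCoeff, mul_assoc]
end

section
/- Let a ∈ ℝ with 0 < a < 1, and let F_a : (−1,1) → ℝ be the (convergent) hypergeometric series F_a(λ) = Σ_{i≥0} ((a)_i (1−a)_i / (i!)²) λ^i, with derivative F_a′. Then for every λ ∈ (0,1): λ(1−λ)·( F_a′(λ)·F_a(1−λ) + F_a(λ)·F_a′(1−λ) ) = sin(πa)/π. In particular this function of λ is constant on (0,1), with constant value 1/B(a,1−a) = sin(πa)/π. -/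
/-- The (convergent, for `|x| < 1`) hypergeometric function
`₂F₁(a, 1-a; 1; x) = Σ_{i≥0} ((a)_i (1-a)_i / (i!)²) x^i` as a real function. -/
noncomputable def hypFR (a : ℝ) (x : ℝ) : ℝ :=
  ∑' i : ℕ,
    ((ascPochhammer ℝ i).eval a * (ascPochhammer ℝ i).eval (1 - a)
      / ((i.factorial : ℝ)) ^ 2) * x ^ i

/-!
Write `F = hypFR a`, `c i` for its coefficients and `p x = x (1 - x)`. The recurrence
`(i + 1)² c (i + 1) = (i + a) (i + 1 - a) c i` says that `(p F')' = a (1 - a) F`, the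
hypergeometric equation in self-adjoint form. It is invariant under `x ↦ 1 - x`, so the Wronskian
`p (F' x F (1 - x) + F x F' (1 - x))` of the solutions `F x` and `F (1 - x)` is constant on
`(0, 1)`. As `x → 0⁺`, Abel's theorem gives `x F (1 - x) → lim c i = 0` and
`x (1 - x) F' (1 - x) → lim i c i`, and by Euler's limit formula for `Γ` and the reflection
formula `lim i c i = 1 / (Γ a Γ (1 - a)) = sin (π a) / π`.
-/

open Filter Topology Finset

def coeffOneSubMul (d : ℕ → ℝ) : ℕ → ℝ
  | 0 => d 0
  | i + 1 => d (i + 1) - d i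

section PowerSeries

variable {d : ℕ → ℝ} {x S M L : ℝ}

theorem sum_range_succ_coeffOneSubMul (d : ℕ → ℝ) (n : ℕ) :
    ∑ i ∈ range (n + 1), coeffOneSubMul d i = d n := by
  induction n with
  | zero => simp [coeffOneSubMul]
  | succ n ih => rw [sum_range_succ, ih, coeffOneSubMul, add_sub_cancel]

theorem abs_coeffOneSubMul_le (hd : ∀ i, |d i| ≤ M) (i : ℕ) :
    |coeffOneSubMul d i| ≤ 2 * M := by
  have hM : 0 ≤ M := (abs_nonneg _).trans (hd 0)
  cases i with
  | zero => simp only [coeffOneSubMul]; linarith [hd 0]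
  | succ i =>
    simp only [coeffOneSubMul]
    linarith [abs_sub (d (i + 1)) (d i), hd (i + 1), hd i]

theorem hasSum_mul_pow_of_succ (h : HasSum (fun i => d (i + 1) * x ^ i) S) :
    HasSum (fun i => d i * x ^ i) (d 0 + x * S) := by
  have h' : HasSum (fun i => d (i + 1) * x ^ (i + 1)) (x * S) := by
    simpa only [pow_succ, mul_left_comm x, mul_comm _ x, mul_assoc] using h.mul_left x
  simpa using HasSum.zero_add (f := fun i => d i * x ^ i) h'

theorem hasSum_coeffOneSubMul_mul_pow (h : HasSum (fun i => d i * x ^ i) S) :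
    HasSum (fun i => coeffOneSubMul d i * x ^ i) ((1 - x) * S) := by
  have h' : HasSum (fun i => coeffOneSubMul d (i + 1) * x ^ (i + 1)) (S - d 0 - x * S) := by
    have e : (fun i => coeffOneSubMul d (i + 1) * x ^ (i + 1)) =
        fun i => d (i + 1) * x ^ (i + 1) - x * (d i * x ^ i) := by
      ext i; simp only [coeffOneSubMul]; ring
    rw [e]
    simpa using ((hasSum_nat_add_iff' 1).mpr h).sub (h.mul_left x)
  convert HasSum.zero_add (f := fun i => coeffOneSubMul d i * x ^ i) h' using 1
  simp only [coeffOneSubMul]; ring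

theorem summable_mul_pow_of_abs_le (hd : ∀ i, |d i| ≤ M) (hx : |x| < 1) :
    Summable fun i => d i * x ^ i :=
  .of_norm_bounded ((summable_geometric_of_lt_one (abs_nonneg x) hx).mul_left M) fun i => by
    rw [norm_mul, norm_pow, Real.norm_eq_abs, Real.norm_eq_abs]
    exact mul_le_mul_of_nonneg_right (hd i) (by positivity)

theorem hasDerivAt_tsum_mul_pow (hd : ∀ i, |d i| ≤ M) (hx : |x| < 1) :
    HasDerivAt (fun y => ∑' i, d i * y ^ i) (∑' i, (i + 1) * d (i + 1) * x ^ i) x := by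
  obtain ⟨r, hxr, hr1⟩ := exists_between hx
  have hr0 : 0 < r := (abs_nonneg x).trans_lt hxr
  have hu : Summable fun i : ℕ => M * (i * r ^ (i - 1)) := by
    refine .mul_left M <| (summable_nat_add_iff 1).mp ?_
    have := (summable_pow_mul_geometric_of_norm_lt_one 1 (r := r)
      (by rwa [Real.norm_of_nonneg hr0.le])).add (summable_geometric_of_lt_one hr0.le hr1)
    simpa [add_mul] using this
  have hbound : ∀ (i : ℕ), ∀ y ∈ Set.Ioo (-r) r,
      ‖d i * (i * y ^ (i - 1))‖ ≤ M * (i * r ^ (i - 1)) := by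
    intro i y hy
    rw [norm_mul, norm_mul, norm_pow, Real.norm_natCast, Real.norm_eq_abs, Real.norm_eq_abs]
    gcongr
    · exact (abs_nonneg _).trans (hd 0)
    · exact hd i
    · exact (abs_lt.mpr hy).le
  have hxr' : x ∈ Set.Ioo (-r) r := abs_lt.mp hxr
  have key := hasDerivAt_tsum_of_isPreconnected hu isOpen_Ioo isPreconnected_Ioo
    (fun i y _ => (hasDerivAt_pow i y).const_mul (d i)) hbound (y₀ := 0)
    ⟨neg_lt_zero.mpr hr0, hr0⟩ (summable_mul_pow_of_abs_le hd (by simp)) hxr'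
  rw [(Summable.of_norm_bounded hu (hbound · x hxr')).tsum_eq_zero_add] at key
  simp only [CharP.cast_eq_zero, zero_mul, mul_zero, zero_add, Nat.cast_add, Nat.cast_one,
    add_tsub_cancel_right] at key
  exact key.congr_deriv (tsum_congr fun i => by ring)

-- Abel's theorem for the series with coefficients `coeffOneSubMul d`, whose partial sums are `d n`.
theorem tendsto_one_sub_mul_tsum_mul_pow (hd : Tendsto d atTop (𝓝 L)) :
    Tendsto (fun x => (1 - x) * ∑' i, d i * x ^ i) (𝓝[<] 1) (𝓝 L) := by
  obtain ⟨M, hM⟩ := (Metric.isBounded_range_of_tendsto d hd).exists_norm_le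
  have hpartial : Tendsto (fun n => ∑ i ∈ range n, coeffOneSubMul d i) atTop (𝓝 L) := by
    refine (tendsto_add_atTop_iff_nat 1).mp ?_
    simpa only [sum_range_succ_coeffOneSubMul] using hd
  refine (Real.tendsto_tsum_powerSeries_nhdsWithin_lt hpartial).congr' ?_
  filter_upwards [Ioo_mem_nhdsLT (show (-1 : ℝ) < 1 by norm_num)] with x hx
  exact ((hasSum_coeffOneSubMul_mul_pow
    (summable_mul_pow_of_abs_le (fun i => hM _ ⟨i, rfl⟩) (abs_lt.mpr hx)).hasSum).tsum_eq)

end PowerSeries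

theorem ascPochhammer_eval_eq_prod_range {R : Type*} [CommSemiring R] (n : ℕ) (r : R) :
    (ascPochhammer R n).eval r = ∏ j ∈ range n, (r + j) := by
  induction n with
  | zero => simp
  | succ n ih => rw [ascPochhammer_succ_eval, ih, prod_range_succ]

noncomputable def hypFRCoeff (a : ℝ) (i : ℕ) : ℝ :=
  (ascPochhammer ℝ i).eval a * (ascPochhammer ℝ i).eval (1 - a) / (i.factorial : ℝ) ^ 2

theorem hypFR_apply (a x : ℝ) : hypFR a x = ∑' i, hypFRCoeff a i * x ^ i := rfl

section Coefficients

variable {a : ℝ}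

theorem hypFRCoeff_zero (a : ℝ) : hypFRCoeff a 0 = 1 := by simp [hypFRCoeff]

theorem succ_sq_mul_hypFRCoeff_succ (a : ℝ) (i : ℕ) :
    ((i : ℝ) + 1) ^ 2 * hypFRCoeff a (i + 1) = (a + i) * (1 - a + i) * hypFRCoeff a i := by
  simp only [hypFRCoeff, ascPochhammer_succ_eval, Nat.factorial_succ, Nat.cast_mul,
    Nat.cast_succ]
  field_simp

theorem succ_mul_sub_hypFRCoeff (a : ℝ) (i : ℕ) :
    ((i : ℝ) + 1) * (((i + 1 : ℕ) : ℝ) * hypFRCoeff a (i + 1) - i * hypFRCoeff a i) =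
      a * (1 - a) * hypFRCoeff a i := by
  push_cast
  linear_combination succ_sq_mul_hypFRCoeff_succ a i

theorem hypFRCoeff_pos (ha0 : 0 < a) (ha1 : a < 1) (i : ℕ) : 0 < hypFRCoeff a i := by
  have := ascPochhammer_pos i a ha0
  have := ascPochhammer_pos i (1 - a) (sub_pos.mpr ha1)
  unfold hypFRCoeff
  positivity

theorem hypFRCoeff_succ_le (ha0 : 0 < a) (ha1 : a < 1) (i : ℕ) :
    hypFRCoeff a (i + 1) ≤ hypFRCoeff a i := by
  have h := succ_sq_mul_hypFRCoeff_succ a i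
  have := hypFRCoeff_pos ha0 ha1 i
  have := hypFRCoeff_pos ha0 ha1 (i + 1)
  nlinarith [sq_nonneg (a - 1 / 2)]

theorem hypFRCoeff_le_one (ha0 : 0 < a) (ha1 : a < 1) (i : ℕ) : hypFRCoeff a i ≤ 1 := by
  induction i with
  | zero => rw [hypFRCoeff_zero]
  | succ i ih => exact (hypFRCoeff_succ_le ha0 ha1 i).trans ih

theorem monotone_natCast_mul_hypFRCoeff (ha0 : 0 < a) (ha1 : a < 1) :
    Monotone fun i : ℕ => i * hypFRCoeff a i := by
  refine monotone_nat_of_le_succ fun i => ?_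
  have h := succ_mul_sub_hypFRCoeff a i
  have : 0 < a * (1 - a) * hypFRCoeff a i :=
    mul_pos (mul_pos ha0 (sub_pos.mpr ha1)) (hypFRCoeff_pos ha0 ha1 i)
  nlinarith

theorem GammaSeq_mul_GammaSeq_one_sub_eq_div_hypFRCoeff {n : ℕ} (hn : n ≠ 0) :
    Real.GammaSeq a n * Real.GammaSeq (1 - a) n = n / ((n + 1) ^ 2 * hypFRCoeff a (n + 1)) := by
  have hpow : (n : ℝ) ^ a * (n : ℝ) ^ (1 - a) = n := by
    rw [← Real.rpow_add (by positivity), add_sub_cancel, Real.rpow_one]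
  simp only [Real.GammaSeq, hypFRCoeff, ← ascPochhammer_eval_eq_prod_range, Nat.factorial_succ,
    Nat.cast_mul, Nat.cast_succ]
  rw [div_mul_div_comm, mul_mul_mul_comm, hpow]
  field_simp

theorem tendsto_natCast_mul_hypFRCoeff (ha0 : 0 < a) (ha1 : a < 1) :
    Tendsto (fun i : ℕ => i * hypFRCoeff a i) atTop
      (𝓝 (Real.sin (Real.pi * a) / Real.pi)) := by
  have hsin : 0 < Real.sin (Real.pi * a) :=
    Real.sin_pos_of_pos_of_lt_pi (by positivity) (by nlinarith [Real.pi_pos])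
  have hGamma : Real.Gamma a * Real.Gamma (1 - a) ≠ 0 := by
    rw [Real.Gamma_mul_Gamma_one_sub]; positivity
  have hlim := (tendsto_natCast_div_add_atTop (1 : ℝ)).div
    ((Real.GammaSeq_tendsto_Gamma a).mul (Real.GammaSeq_tendsto_Gamma (1 - a))) hGamma
  rw [Real.Gamma_mul_Gamma_one_sub, one_div_div] at hlim
  refine (tendsto_add_atTop_iff_nat 1).mp (hlim.congr' ?_)
  filter_upwards [eventually_ne_atTop 0] with n hn
  have := hypFRCoeff_pos ha0 ha1 (n + 1)
  simp only [Pi.div_apply]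
  rw [GammaSeq_mul_GammaSeq_one_sub_eq_div_hypFRCoeff hn]
  field_simp
  push_cast
  ring

theorem natCast_mul_hypFRCoeff_le (ha0 : 0 < a) (ha1 : a < 1) (i : ℕ) :
    i * hypFRCoeff a i ≤ Real.sin (Real.pi * a) / Real.pi :=
  (monotone_natCast_mul_hypFRCoeff ha0 ha1).ge_of_tendsto
    (tendsto_natCast_mul_hypFRCoeff ha0 ha1) i

theorem tendsto_hypFRCoeff_atTop (ha0 : 0 < a) (ha1 : a < 1) :
    Tendsto (hypFRCoeff a) atTop (𝓝 0) := by
  have := (tendsto_natCast_mul_hypFRCoeff ha0 ha1).mul tendsto_inv_atTop_nhds_zero_nat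
  rw [mul_zero] at this
  refine this.congr' ?_
  filter_upwards [eventually_ne_atTop 0] with n hn
  field_simp

end Coefficients

section Analysis

variable {a x : ℝ}

theorem abs_succ_mul_hypFRCoeff_succ_le (ha0 : 0 < a) (ha1 : a < 1) (i : ℕ) :
    |((i : ℝ) + 1) * hypFRCoeff a (i + 1)| ≤ Real.sin (Real.pi * a) / Real.pi := by
  rw [abs_of_pos (by have := hypFRCoeff_pos ha0 ha1 (i + 1); positivity)]
  exact_mod_cast natCast_mul_hypFRCoeff_le ha0 ha1 (i + 1)

theorem hasDerivAt_hypFR (ha0 : 0 < a) (ha1 : a < 1) (hx : |x| < 1) :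
    HasDerivAt (hypFR a) (∑' i, (i + 1) * hypFRCoeff a (i + 1) * x ^ i) x :=
  hasDerivAt_tsum_mul_pow (fun i => (abs_of_pos (hypFRCoeff_pos ha0 ha1 i)).trans_le
    (hypFRCoeff_le_one ha0 ha1 i)) hx

theorem eventuallyEq_deriv_hypFR (ha0 : 0 < a) (ha1 : a < 1) (hx : |x| < 1) :
    deriv (hypFR a) =ᶠ[𝓝 x] fun y => ∑' i, (i + 1) * hypFRCoeff a (i + 1) * y ^ i := by
  filter_upwards [(isOpen_lt continuous_abs continuous_const).mem_nhds hx] with y hy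
  exact (hasDerivAt_hypFR ha0 ha1 hy).deriv

theorem continuousAt_deriv_hypFR (ha0 : 0 < a) (ha1 : a < 1) (hx : |x| < 1) :
    ContinuousAt (deriv (hypFR a)) x :=
  (hasDerivAt_tsum_mul_pow (abs_succ_mul_hypFRCoeff_succ_le ha0 ha1) hx).continuousAt.congr
    (eventuallyEq_deriv_hypFR ha0 ha1 hx).symm

theorem hasSum_mul_deriv_hypFR (ha0 : 0 < a) (ha1 : a < 1) (hx : |x| < 1) :
    HasSum (fun i => i * hypFRCoeff a i * x ^ i) (x * deriv (hypFR a) x) := by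
  rw [(hasDerivAt_hypFR ha0 ha1 hx).deriv]
  have := (summable_mul_pow_of_abs_le (abs_succ_mul_hypFRCoeff_succ_le ha0 ha1) hx).hasSum
  simpa using hasSum_mul_pow_of_succ (d := fun i => i * hypFRCoeff a i) (by exact_mod_cast this)

theorem hasDerivAt_mul_one_sub_mul_deriv_hypFR (ha0 : 0 < a) (ha1 : a < 1) (hx : |x| < 1) :
    HasDerivAt (fun y => y * (1 - y) * deriv (hypFR a) y) (a * (1 - a) * hypFR a x) x := by
  set g : ℕ → ℝ := fun i => i * hypFRCoeff a i
  have hg : ∀ i, |g i| ≤ Real.sin (Real.pi * a) / Real.pi := fun i =>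
    (abs_of_nonneg (by have := hypFRCoeff_pos ha0 ha1 i; positivity)).trans_le
      (natCast_mul_hypFRCoeff_le ha0 ha1 i)
  have heq : (fun y => ∑' i, coeffOneSubMul g i * y ^ i) =ᶠ[𝓝 x]
      fun y => y * (1 - y) * deriv (hypFR a) y := by
    filter_upwards [(isOpen_lt continuous_abs continuous_const).mem_nhds hx] with y hy
    rw [(hasSum_coeffOneSubMul_mul_pow (hasSum_mul_deriv_hypFR ha0 ha1 hy)).tsum_eq]
    ring
  refine ((hasDerivAt_tsum_mul_pow (abs_coeffOneSubMul_le hg) hx).congr_of_eventuallyEq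
    heq.symm).congr_deriv ?_
  rw [hypFR_apply, ← tsum_mul_left]
  refine tsum_congr fun i => ?_
  rw [coeffOneSubMul, ← mul_assoc, succ_mul_sub_hypFRCoeff, mul_assoc]

end Analysis

section Wronskian

variable {a : ℝ}

theorem hypFR_zero (a : ℝ) : hypFR a 0 = 1 := by
  rw [hypFR_apply, tsum_eq_single 0 fun i hi => by rw [zero_pow hi, mul_zero]]
  simp [hypFRCoeff_zero]

theorem tendsto_one_sub_mul_hypFR (ha0 : 0 < a) (ha1 : a < 1) :
    Tendsto (fun u => (1 - u) * hypFR a u) (𝓝[<] 1) (𝓝 0) :=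
  tendsto_one_sub_mul_tsum_mul_pow (tendsto_hypFRCoeff_atTop ha0 ha1)

theorem tendsto_one_sub_mul_mul_deriv_hypFR (ha0 : 0 < a) (ha1 : a < 1) :
    Tendsto (fun u => (1 - u) * (u * deriv (hypFR a) u)) (𝓝[<] 1)
      (𝓝 (Real.sin (Real.pi * a) / Real.pi)) := by
  refine (tendsto_one_sub_mul_tsum_mul_pow (tendsto_natCast_mul_hypFRCoeff ha0 ha1)).congr' ?_
  filter_upwards [Ioo_mem_nhdsLT (show (-1 : ℝ) < 1 by norm_num)] with u hu
  rw [(hasSum_mul_deriv_hypFR ha0 ha1 (abs_lt.mpr hu)).tsum_eq]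

noncomputable def hypFRWronskian (a x : ℝ) : ℝ :=
  x * (1 - x) * (deriv (hypFR a) x * hypFR a (1 - x) + hypFR a x * deriv (hypFR a) (1 - x))

theorem hasDerivAt_hypFRWronskian (ha0 : 0 < a) (ha1 : a < 1) {x : ℝ} (hx : x ∈ Set.Ioo 0 1) :
    HasDerivAt (hypFRWronskian a) 0 x := by
  set P : ℝ → ℝ := fun y => y * (1 - y) * deriv (hypFR a) y
  have hx' : |x| < 1 := abs_lt.mpr ⟨by linarith [hx.1], hx.2⟩
  have hx'' : |1 - x| < 1 := abs_lt.mpr ⟨by linarith [hx.2], by linarith [hx.1]⟩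
  have hsub : HasDerivAt (fun y : ℝ => 1 - y) (-1) x := (hasDerivAt_id x).const_sub 1
  have hF := (hasDerivAt_hypFR ha0 ha1 hx').differentiableAt.hasDerivAt
  have hF' := (hasDerivAt_hypFR ha0 ha1 hx'').differentiableAt.hasDerivAt.comp x hsub
  have hP := hasDerivAt_mul_one_sub_mul_deriv_hypFR ha0 ha1 hx'
  have hP' := (hasDerivAt_mul_one_sub_mul_deriv_hypFR ha0 ha1 hx'').comp x hsub
  have hW : hypFRWronskian a = fun y => P y * hypFR a (1 - y) + hypFR a y * P (1 - y) := by
    ext y; simp only [hypFRWronskian, P]; ring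
  rw [hW]
  refine ((hP.mul hF').add (hF.mul hP')).congr_deriv ?_
  simp only [Function.comp_def]
  ring

theorem hypFRWronskian_eq_of_mem_Ioo (ha0 : 0 < a) (ha1 : a < 1) {x y : ℝ}
    (hx : x ∈ Set.Ioo 0 1) (hy : y ∈ Set.Ioo 0 1) : hypFRWronskian a x = hypFRWronskian a y :=
  isOpen_Ioo.is_const_of_deriv_eq_zero isPreconnected_Ioo
    (fun _ hz => (hasDerivAt_hypFRWronskian ha0 ha1 hz).differentiableAt.differentiableWithinAt)
    (fun _ hz => (hasDerivAt_hypFRWronskian ha0 ha1 hz).deriv) hx hy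

theorem tendsto_hypFRWronskian_nhdsGT_zero (ha0 : 0 < a) (ha1 : a < 1) :
    Tendsto (hypFRWronskian a) (𝓝[>] 0) (𝓝 (Real.sin (Real.pi * a) / Real.pi)) := by
  have hreflect : Tendsto (fun x : ℝ => 1 - x) (𝓝[>] 0) (𝓝[<] 1) :=
    tendsto_nhdsWithin_of_tendsto_nhds_of_eventually_within _
      (((continuous_sub_left 1).tendsto' 0 1 (sub_zero 1)).mono_left nhdsWithin_le_nhds)
      (eventually_nhdsWithin_of_forall fun x (hx : 0 < x) => sub_lt_self (1 : ℝ) hx)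
  have h0 : |(0 : ℝ)| < 1 := by simp
  have hF := (hasDerivAt_hypFR ha0 ha1 h0).continuousAt.tendsto.mono_left
    (nhdsWithin_le_nhds (s := Set.Ioi 0))
  have hF' := ((continuous_sub_left 1).continuousAt.mul
    (continuousAt_deriv_hypFR ha0 ha1 h0)).tendsto.mono_left (nhdsWithin_le_nhds (s := Set.Ioi 0))
  have hlim := (hF'.mul ((tendsto_one_sub_mul_hypFR ha0 ha1).comp hreflect)).add
    (hF.mul ((tendsto_one_sub_mul_mul_deriv_hypFR ha0 ha1).comp hreflect))
  rw [hypFR_zero, mul_zero, zero_add, one_mul] at hlim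
  refine hlim.congr fun x => ?_
  simp only [hypFRWronskian, Function.comp_def, Pi.mul_apply]
  ring

end Wronskian

/-- For `0 < a < 1` and `0 < λ < 1`:
`λ(1-λ)(F_a′(λ)F_a(1-λ) + F_a(λ)F_a′(1-λ)) = sin(πa)/π = 1/B(a, 1-a)`. -/
theorem hypFR_wronskian_const (a : ℝ) (ha0 : 0 < a) (ha1 : a < 1)
    (l : ℝ) (hl0 : 0 < l) (hl1 : l < 1) :
    l * (1 - l) * (deriv (hypFR a) l * hypFR a (1 - l) + hypFR a l * deriv (hypFR a) (1 - l))
      = Real.sin (Real.pi * a) / Real.pi := by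
  have hl : l ∈ Set.Ioo 0 1 := ⟨hl0, hl1⟩
  have hconst : hypFRWronskian a =ᶠ[𝓝[>] 0] fun _ => hypFRWronskian a l := by
    filter_upwards [Ioo_mem_nhdsGT one_pos] with x hx
    exact hypFRWronskian_eq_of_mem_Ioo ha0 ha1 hx hl
  exact tendsto_nhds_unique tendsto_const_nhds
    ((tendsto_hypFRWronskian_nhdsGT_zero ha0 ha1).congr' hconst)
end

section
/- Let K be a field of characteristic zero, N ≥ 2 an integer, and suppose K contains a primitive N-th root of unity; let μ_N ⊂ K^× be the group of N-th roots of unity. Let ℓ : K^× → (K, +) be a group homomorphism that vanishes on every element of finite order of K^×. Then for every integer n: 2·ℓ(N) − (1/2)·Σ_{ε ∈ μ_N, ε ≠ 1} (ε^n + ε^{−n})·ℓ((1−ε)(1−ε^{−1})) = 2·Σ_{ε ∈ μ_N, ε ≠ 1} (1 − ε^{−n})·ℓ(1−ε), where ℓ(N) means ℓ applied to the unit N·1_K. (This is the equality of the two displayed expressions for the constant κ_n^{(p)} in the paper, where ℓ = log^{(p)} on W(𝔽̄_p)^× vanishes on roots of unity.) -/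
/-!
Differentiating `X ^ N - 1 = ∏_{ε ∈ μ_N} (X - ε)` at `X = 1` gives `∏_{ε ≠ 1} (1 - ε) = N`, so
`ℓ(N) = Σ_{ε ≠ 1} ℓ(1 - ε)`. Since `1 - ε⁻¹ = -ε⁻¹ (1 - ε)` and `-ε⁻¹` has finite order,
`ℓ(1 - ε⁻¹) = ℓ(1 - ε)`; hence `ℓ((1 - ε)(1 - ε⁻¹)) = 2 ℓ(1 - ε)`, and the substitution
`ε ↦ ε⁻¹` gives `Σ ε^n ℓ(1 - ε) = Σ ε^{-n} ℓ(1 - ε)`. The identity is then linear algebra.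
-/

open Finset Polynomial

theorem IsPrimitiveRoot.prod_one_sub_erase_one {R : Type*} [CommRing R] [IsDomain R]
    [DecidableEq R] {ζ : R} {N : ℕ} (hN : 0 < N) (hζ : IsPrimitiveRoot ζ N) :
    ∏ ε ∈ (nthRootsFinset N (1 : R)).erase 1, (1 - ε) = N := by
  have h := congrArg (fun p => eval 1 (derivative p)) (X_pow_sub_one_eq_prod hN hζ)
  simp only [derivative_sub, derivative_X_pow, derivative_one, sub_zero, eval_mul, eval_C,
    eval_pow, eval_X, one_pow, mul_one, prod_eq_multiset_prod] at h
  rw [h, eval_multiset_prod_X_sub_C_derivative (one_mem_nthRootsFinset hN),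
    ← Finset.erase_val, ← prod_eq_multiset_prod]

theorem inv_mem_nthRootsFinset_one_erase_one_iff {K : Type*} [Field K] [DecidableEq K]
    {N : ℕ} (hN : 0 < N) {ε : K} :
    ε⁻¹ ∈ (nthRootsFinset N (1 : K)).erase 1 ↔ ε ∈ (nthRootsFinset N (1 : K)).erase 1 := by
  simp [mem_nthRootsFinset hN, inv_pow]

theorem sum_zpow_mul_eq_sum_zpow_neg_mul {K M : Type*} [DivisionRing K] [AddCommMonoid M]
    [Module K M] {S : Finset K} (hS : ∀ ε, ε⁻¹ ∈ S ↔ ε ∈ S) {f : K → M}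
    (hf : ∀ ε ∈ S, f ε⁻¹ = f ε) (n : ℤ) :
    ∑ ε ∈ S, ε ^ n • f ε = ∑ ε ∈ S, ε ^ (-n) • f ε :=
  sum_equiv (Equiv.inv K) (fun ε => (hS ε).symm) fun ε hε => by
    simp [hf ε hε, inv_zpow']

section Logarithm

variable {R M : Type*} [AddCommMonoid M] {ℓ : R → M}

theorem map_prod_of_ne_zero [CommMonoidWithZero R] [NoZeroDivisors R] [Nontrivial R]
    {α : Type*} (hhom : ∀ x y : R, x ≠ 0 → y ≠ 0 → ℓ (x * y) = ℓ x + ℓ y) (hone : ℓ 1 = 0)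
    (s : Finset α) {f : α → R} (hf : ∀ a ∈ s, f a ≠ 0) :
    ℓ (∏ a ∈ s, f a) = ∑ a ∈ s, ℓ (f a) := by
  induction s using Finset.cons_induction with
  | empty => simpa
  | cons a s ha ih =>
    rw [forall_mem_cons] at hf
    rw [prod_cons, sum_cons, hhom _ _ hf.1 (prod_ne_zero_iff.mpr hf.2), ih hf.2]

variable [Field R] (hhom : ∀ x y : R, x ≠ 0 → y ≠ 0 → ℓ (x * y) = ℓ x + ℓ y)
  (hfin : ∀ x : R, (∃ m : ℕ, 0 < m ∧ x ^ m = 1) → ℓ x = 0)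
  {N : ℕ} (hN : 0 < N) {ε : R} (hεN : ε ^ N = 1) (hε : ε ≠ 1)
include hhom hfin hN hεN hε

theorem map_one_sub_inv_of_pow_eq_one : ℓ (1 - ε⁻¹) = ℓ (1 - ε) := by
  have hε0 : ε ≠ 0 := by rintro rfl; simp [hN.ne'] at hεN
  have hsplit : 1 - ε⁻¹ = -ε⁻¹ * (1 - ε) := by field_simp; ring
  have htors : (-ε⁻¹) ^ (2 * N) = 1 := by
    rw [pow_mul, neg_sq, ← pow_mul, mul_comm 2 N, pow_mul, inv_pow, hεN, inv_one, one_pow]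
  rw [hsplit, hhom _ _ (by simpa) (sub_ne_zero.mpr hε.symm), hfin _ ⟨2 * N, by omega, htors⟩,
    zero_add]

theorem map_one_sub_mul_one_sub_inv_of_pow_eq_one :
    ℓ ((1 - ε) * (1 - ε⁻¹)) = ℓ (1 - ε) + ℓ (1 - ε) := by
  rw [hhom _ _ (sub_ne_zero.mpr hε.symm) (sub_ne_zero.mpr (inv_ne_one.mpr hε).symm),
    map_one_sub_inv_of_pow_eq_one hhom hfin hN hεN hε]

end Logarithm

/-- The equality of the two expressions for the constant `κ_n^{(p)}`: for a homomorphism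
`ℓ` from `K^×` to `(K,+)` vanishing on elements of finite order, and `μ_N` the `N`-th roots
of unity in `K`,
`2ℓ(N) - ½ Σ_{ε∈μ_N, ε≠1} (ε^n + ε^{-n}) ℓ((1-ε)(1-ε⁻¹)) = 2 Σ_{ε∈μ_N, ε≠1} (1-ε^{-n}) ℓ(1-ε)`. -/
theorem kappa_two_expressions (K : Type*) [Field K] [CharZero K] [DecidableEq K]
    (N : ℕ) (hN : 2 ≤ N) (ζ : K) (hζ : IsPrimitiveRoot ζ N)
    (ℓ : K → K)
    (hhom : ∀ x y : K, x ≠ 0 → y ≠ 0 → ℓ (x * y) = ℓ x + ℓ y)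
    (hfin : ∀ x : K, (∃ m : ℕ, 0 < m ∧ x ^ m = 1) → ℓ x = 0)
    (n : ℤ) :
    2 * ℓ (N : K) - (1 / 2 : K) *
        ∑ ε ∈ (Polynomial.nthRootsFinset N (1 : K)).erase 1,
          (ε ^ n + ε ^ (-n)) * ℓ ((1 - ε) * (1 - ε⁻¹))
      = 2 * ∑ ε ∈ (Polynomial.nthRootsFinset N (1 : K)).erase 1,
          (1 - ε ^ (-n)) * ℓ (1 - ε) := by
  have hN0 : 0 < N := by omega
  set S := (nthRootsFinset N (1 : K)).erase 1
  have hS : ∀ ε ∈ S, ε ^ N = 1 ∧ ε ≠ 1 := fun ε hε =>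
    ⟨(mem_nthRootsFinset hN0 1).mp (mem_of_mem_erase hε), ne_of_mem_erase hε⟩
  have hℓN : ℓ N = ∑ ε ∈ S, ℓ (1 - ε) := by
    rw [← hζ.prod_one_sub_erase_one hN0]
    exact map_prod_of_ne_zero hhom (hfin 1 ⟨1, one_pos, one_pow 1⟩) S
      fun ε hε => sub_ne_zero.mpr (hS ε hε).2.symm
  have hsym : ∑ ε ∈ S, ε ^ n * ℓ (1 - ε) = ∑ ε ∈ S, ε ^ (-n) * ℓ (1 - ε) :=
    sum_zpow_mul_eq_sum_zpow_neg_mul (fun _ => inv_mem_nthRootsFinset_one_erase_one_iff hN0)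
      (fun ε hε => map_one_sub_inv_of_pow_eq_one hhom hfin hN0 (hS ε hε).1 (hS ε hε).2) n
  have hlhs : ∑ ε ∈ S, (ε ^ n + ε ^ (-n)) * ℓ ((1 - ε) * (1 - ε⁻¹))
      = 2 * ∑ ε ∈ S, ε ^ n * ℓ (1 - ε) + 2 * ∑ ε ∈ S, ε ^ (-n) * ℓ (1 - ε) := by
    rw [mul_sum, mul_sum, ← sum_add_distrib]
    refine sum_congr rfl fun ε hε => ?_
    rw [map_one_sub_mul_one_sub_inv_of_pow_eq_one hhom hfin hN0 (hS ε hε).1 (hS ε hε).2]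
    ring
  have hrhs : ∑ ε ∈ S, (1 - ε ^ (-n)) * ℓ (1 - ε)
      = ∑ ε ∈ S, ℓ (1 - ε) - ∑ ε ∈ S, ε ^ (-n) * ℓ (1 - ε) := by
    simp only [sub_mul, one_mul, sum_sub_distrib]
  rw [hlhs, hrhs, hℓN, mul_add, ← mul_assoc, ← mul_assoc, one_div_mul_cancel two_ne_zero]
  linear_combination -hsym
end
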